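/- arXiv:2507.08370 — 4 statements merged into one kernel-verified Lean document; each statement's English description precedes it below -/
import Mathlib

section
/- For every f in the Schwartz space on R, ‖f‖_{L^2}^2 ≤ 2 ‖f'‖_{L^2} · ‖x·f‖_{L^2}. -/
open MeasureTheory
open scoped RealInnerProductSpace

/-! Differentiating `x ‖f x‖²`, whose integral over `ℝ` vanishes since it decays at `±∞`, gives
`∫ ‖f‖² = -2 ∫ ⟪f', x f⟫`; the Cauchy–Schwarz inequality in `L²` bounds the right-hand side. -/

section CauchySchwarz

variable {α : Type*} [MeasurableSpace α] {μ : Measure α}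

theorem MeasureTheory.MemLp.integrable_norm_mul_norm {E F : Type*} [NormedAddCommGroup E]
    [NormedAddCommGroup F] {g : α → E} {h : α → F} (hg : MemLp g 2 μ) (hh : MemLp h 2 μ) :
    Integrable (fun a ↦ ‖g a‖ * ‖h a‖) μ :=
  hg.norm.integrable_mul hh.norm

theorem integral_norm_mul_norm_le_sqrt_mul_sqrt {E F : Type*} [NormedAddCommGroup E]
    [NormedAddCommGroup F] {g : α → E} {h : α → F} (hg : MemLp g 2 μ) (hh : MemLp h 2 μ) :
    ∫ a, ‖g a‖ * ‖h a‖ ∂μ ≤ √(∫ a, ‖g a‖ ^ 2 ∂μ) * √(∫ a, ‖h a‖ ^ 2 ∂μ) := by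
  have holder := integral_mul_norm_le_Lp_mul_Lq Real.HolderConjugate.two_two
    (by simpa using hg.norm) (by simpa using hh.norm)
  simpa [Real.sqrt_eq_rpow] using holder

variable {F : Type*} [NormedAddCommGroup F] [InnerProductSpace ℝ F]

theorem MeasureTheory.MemLp.integrable_inner {g h : α → F} (hg : MemLp g 2 μ)
    (hh : MemLp h 2 μ) : Integrable (fun a ↦ ⟪g a, h a⟫) μ :=
  (hg.integrable_norm_mul_norm hh).mono (hg.1.inner hh.1)
    (ae_of_all _ fun a ↦ by simpa using abs_real_inner_le_norm (g a) (h a))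

theorem abs_integral_inner_le_sqrt_mul_sqrt {g h : α → F} (hg : MemLp g 2 μ)
    (hh : MemLp h 2 μ) :
    |∫ a, ⟪g a, h a⟫ ∂μ| ≤ √(∫ a, ‖g a‖ ^ 2 ∂μ) * √(∫ a, ‖h a‖ ^ 2 ∂μ) :=
  calc |∫ a, ⟪g a, h a⟫ ∂μ| ≤ ∫ a, ‖g a‖ * ‖h a‖ ∂μ := by
        rw [← Real.norm_eq_abs]
        exact norm_integral_le_of_norm_le (hg.integrable_norm_mul_norm hh)
          (ae_of_all _ fun a ↦ norm_inner_le_norm (g a) (h a))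
    _ ≤ _ := integral_norm_mul_norm_le_sqrt_mul_sqrt hg hh

end CauchySchwarz

namespace SchwartzMap

variable {F : Type*} [NormedAddCommGroup F] [InnerProductSpace ℝ F]

theorem memLp_deriv (f : 𝓢(ℝ, F)) (p : ENNReal) : MemLp (deriv f) p := by
  simpa [funext (derivCLM_apply ℝ f)] using (derivCLM ℝ F f).memLp p

theorem memLp_id_smul (f : 𝓢(ℝ, F)) (p : ENNReal) : MemLp (fun x : ℝ ↦ x • f x) p := by
  simpa [smulLeftCLM_apply Function.HasTemperateGrowth.id'] using
    (smulLeftCLM F (fun x : ℝ ↦ x) f).memLp p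

theorem integral_norm_sq_eq_neg_two_mul_integral_inner_deriv (f : 𝓢(ℝ, F)) :
    ∫ x, ‖f x‖ ^ 2 = -(2 * ∫ x, ⟪deriv f x, x • f x⟫) := by
  have hderiv (x : ℝ) : HasDerivAt (fun t ↦ t * ‖f t‖ ^ 2)
      (‖f x‖ ^ 2 + 2 * ⟪deriv f x, x • f x⟫) x := by
    refine ((hasDerivAt_id' x).mul f.differentiableAt.hasDerivAt.norm_sq).congr_deriv ?_
    rw [real_inner_smul_right, real_inner_comm]
    ring
  have hnorm_sq : Integrable (fun x ↦ ‖f x‖ ^ 2) := (f.memLp 2).integrable_norm_pow two_ne_zero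
  have hinner := (f.memLp_deriv 2).integrable_inner (f.memLp_id_smul 2)
  have hmoment : Integrable (fun x : ℝ ↦ x * ‖f x‖ ^ 2) :=
    ((f.memLp_id_smul 2).integrable_inner (f.memLp 2)).congr (ae_of_all _ fun x ↦ by
      simp only [real_inner_smul_left, real_inner_self_eq_norm_sq])
  have hzero := integral_eq_zero_of_hasDerivAt_of_integrable hderiv
    (hnorm_sq.add (hinner.const_mul 2)) hmoment
  rw [integral_add hnorm_sq (hinner.const_mul 2), integral_const_mul] at hzero
  linarith

end SchwartzMap

/-- One-dimensional Heisenberg uncertainty principle for Schwartz functions: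
`‖f‖_{L²}² ≤ 2 ‖f'‖_{L²} ‖x f‖_{L²}`. -/
theorem heisenberg_1d_schwartz (f : SchwartzMap ℝ ℂ) :
    (∫ x : ℝ, ‖f x‖ ^ 2) ≤
      2 * Real.sqrt (∫ x : ℝ, ‖deriv f x‖ ^ 2) * Real.sqrt (∫ x : ℝ, ‖x • f x‖ ^ 2) := by
  have hcs := abs_integral_inner_le_sqrt_mul_sqrt (f.memLp_deriv 2) (f.memLp_id_smul 2)
  rw [f.integral_norm_sq_eq_neg_two_mul_integral_inner_deriv, mul_assoc]
  linarith [neg_abs_le (∫ x, ⟪deriv f x, x • f x⟫)]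
end

section
/- A Schwartz function f on R satisfies ‖f‖_{L^2}^2 = 2 ‖f'‖_{L^2} ‖x·f‖_{L^2} with f not identically zero only if f(x) = c·e^{-λ x^2/2} for some constant c and some λ > 0; in particular the extremizers of the 1D Heisenberg inequality are Gaussians. -/
/-!
For real `t`, expanding `‖f' + t x f‖²` and integrating `x (‖f‖²)' = 2 x ⟪f, f'⟫` by parts gives
`∫ ‖f' + t x f‖² = ∫ ‖f'‖² - t ∫ ‖f‖² + t² ∫ ‖x f‖²`. Nonnegativity of this quadratic in `t` is the
Heisenberg inequality; in the equality case it vanishes at `t = ‖f'‖₂ / ‖x f‖₂`, so the continuous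
function `f' + t x f` vanishes identically, and the linear ODE `f' = -t x f` forces
`f = f(0) e^{-t x²/2}`.
-/

open MeasureTheory
open scoped RealInnerProductSpace SchwartzMap

namespace SchwartzMap

section Integrable

variable {D E : Type*} [NormedAddCommGroup D] [NormedSpace ℝ D] [MeasurableSpace D]
  [BorelSpace D] [SecondCountableTopology D] {μ : Measure D} [μ.HasTemperateGrowth]
  [NormedAddCommGroup E] [InnerProductSpace ℝ E]

theorem integrable_inner (f g : 𝓢(D, E)) : Integrable (fun x ↦ ⟪f x, g x⟫) μ := by
  obtain ⟨M, -, hM⟩ := g.decay 0 0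
  refine (f.integrable.norm.mul_const M).mono' (by fun_prop) (.of_forall fun x ↦ ?_)
  calc ‖⟪f x, g x⟫‖ ≤ ‖f x‖ * ‖g x‖ := norm_inner_le_norm _ _
    _ ≤ ‖f x‖ * M := by gcongr; simpa using hM x

theorem integrable_norm_sq (f : 𝓢(D, E)) : Integrable (fun x ↦ ‖f x‖ ^ 2) μ := by
  simpa only [real_inner_self_eq_norm_sq] using f.integrable_inner f

theorem integral_norm_sq_pos [μ.IsOpenPosMeasure] (f : 𝓢(D, E)) {x : D} (hx : f x ≠ 0) :
    0 < ∫ x, ‖f x‖ ^ 2 ∂μ :=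
  integral_pos_of_integrable_nonneg_nonzero (by fun_prop) f.integrable_norm_sq
    (fun _ ↦ by positivity) (by simpa using hx)

end Integrable

variable {E : Type*} [NormedAddCommGroup E] [InnerProductSpace ℝ E]

theorem smulLeftCLM_id_apply (f : 𝓢(ℝ, E)) (x : ℝ) :
    smulLeftCLM E (fun x : ℝ ↦ x) f x = x • f x :=
  smulLeftCLM_apply_apply (by fun_prop) f x

theorem integrable_inner_smul_id (f g : 𝓢(ℝ, E)) :
    Integrable fun x : ℝ ↦ ⟪x • f x, g x⟫ := by
  simpa only [smulLeftCLM_id_apply] using (smulLeftCLM E (fun x : ℝ ↦ x) f).integrable_inner g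

theorem integrable_norm_smul_id_sq (f : 𝓢(ℝ, E)) : Integrable fun x : ℝ ↦ ‖x • f x‖ ^ 2 := by
  simpa only [smulLeftCLM_id_apply] using (smulLeftCLM E (fun x : ℝ ↦ x) f).integrable_norm_sq

theorem integrable_norm_deriv_sq (f : 𝓢(ℝ, E)) : Integrable fun x ↦ ‖deriv f x‖ ^ 2 := by
  simpa only [derivCLM_apply] using (derivCLM ℝ E f).integrable_norm_sq

theorem two_mul_integral_inner_smul_deriv (f : 𝓢(ℝ, E)) :
    2 * ∫ x, ⟪x • f x, deriv f x⟫ = -∫ x, ‖f x‖ ^ 2 := by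
  have hf : ∀ x, HasDerivAt f (deriv f x) x := fun x ↦ f.differentiableAt.hasDerivAt
  have hsmul : ∀ x : ℝ, ∀ v, x * (2 * ⟪f x, v⟫) = 2 * ⟪x • f x, v⟫ := fun x v ↦ by
    rw [real_inner_smul_left]; ring
  have hsq : ∀ x : ℝ, x * ‖f x‖ ^ 2 = ⟪x • f x, f x⟫ := fun x ↦ by
    rw [real_inner_smul_left, real_inner_self_eq_norm_sq]
  have hibp := integral_mul_deriv_eq_deriv_mul_of_integrable (u := fun x : ℝ ↦ x) (u' := 1)
    (v := fun x ↦ ‖f x‖ ^ 2) (v' := fun x ↦ 2 * ⟪f x, deriv f x⟫)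
    (fun x _ ↦ hasDerivAt_id x) (fun x _ ↦ (hf x).norm_sq)
    (by simpa only [Pi.mul_def, hsmul, derivCLM_apply] using
      ((integrable_inner_smul_id f (derivCLM ℝ E f)).const_mul 2))
    (by simpa only [Pi.mul_def, Pi.one_apply, one_mul] using f.integrable_norm_sq)
    (by simpa only [Pi.mul_def, hsq] using integrable_inner_smul_id f f)
  simpa only [hsmul, integral_const_mul, Pi.one_apply, one_mul] using hibp

theorem integral_norm_deriv_add_smul_sq (f : 𝓢(ℝ, E)) (t : ℝ) :
    ∫ x, ‖deriv f x + t • x • f x‖ ^ 2 =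
      (∫ x, ‖deriv f x‖ ^ 2) - t * (∫ x, ‖f x‖ ^ 2) + t ^ 2 * ∫ x, ‖x • f x‖ ^ 2 := by
  have hexpand : ∀ x : ℝ, ‖deriv f x + t • x • f x‖ ^ 2 =
      ‖deriv f x‖ ^ 2 + t * (2 * ⟪x • f x, deriv f x⟫) + t ^ 2 * ‖x • f x‖ ^ 2 := fun x ↦ by
    rw [norm_add_sq_real, inner_smul_right, norm_smul, mul_pow, Real.norm_eq_abs, sq_abs,
      real_inner_comm]
    ring
  have hinner := (integrable_inner_smul_id f (derivCLM ℝ E f)).const_mul 2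
  simp only [derivCLM_apply] at hinner
  have hfirst : Integrable fun x : ℝ ↦ ‖deriv f x‖ ^ 2 + t * (2 * ⟪x • f x, deriv f x⟫) :=
    (integrable_norm_deriv_sq f).add (hinner.const_mul t)
  rw [integral_congr_ae (.of_forall hexpand),
    integral_add hfirst ((integrable_norm_smul_id_sq f).const_mul _),
    integral_add (integrable_norm_deriv_sq f) (hinner.const_mul t), integral_const_mul,
    integral_const_mul, integral_const_mul, two_mul_integral_inner_smul_deriv]
  ring

theorem deriv_add_smul_eq_zero_of_integral_norm_sq_eq_zero (f : 𝓢(ℝ, E)) {t : ℝ}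
    (h : ∫ x, ‖deriv f x + t • x • f x‖ ^ 2 = 0) (x : ℝ) : deriv f x + t • x • f x = 0 := by
  set g : 𝓢(ℝ, E) := derivCLM ℝ E f + t • smulLeftCLM E (fun x : ℝ ↦ x) f
  have hg : ∀ x, g x = deriv f x + t • x • f x := fun x ↦ by
    simp [g, smulLeftCLM_id_apply]
  simp only [← hg] at h ⊢
  by_contra hx
  exact (g.integral_norm_sq_pos hx).ne' h

end SchwartzMap

theorem eq_exp_smul_of_hasDerivAt {E : Type*} [NormedAddCommGroup E] [NormedSpace ℝ E]
    {f : ℝ → E} {t : ℝ} (hf : ∀ x, HasDerivAt f (-(t * x) • f x) x) (x : ℝ) :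
    f x = Real.exp (-t * x ^ 2 / 2) • f 0 := by
  have hg : ∀ y, HasDerivAt (fun y ↦ Real.exp (t * y ^ 2 / 2) • f y) 0 y := fun y ↦ by
    have he : HasDerivAt (fun y ↦ Real.exp (t * y ^ 2 / 2))
        (Real.exp (t * y ^ 2 / 2) * (t * y)) y := by
      convert (((hasDerivAt_pow 2 y).const_mul t).div_const 2).exp using 1
      push_cast
      ring
    refine (he.smul (hf y)).congr_deriv ?_
    rw [smul_smul, ← add_smul, mul_neg, neg_add_cancel, zero_smul]
  have hconst := is_const_of_deriv_eq_zero (fun y ↦ (hg y).differentiableAt)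
    (fun y ↦ (hg y).deriv) x 0
  simp only [ne_eq, OfNat.ofNat_ne_zero, not_false_eq_true, zero_pow, mul_zero, zero_div,
    Real.exp_zero, one_smul] at hconst
  rw [← hconst, smul_smul, ← Real.exp_add, neg_mul, neg_div, neg_add_cancel, Real.exp_zero,
    one_smul]

/-- Equality case of the one-dimensional Heisenberg uncertainty principle: the only
nonzero extremizers of `‖f‖_{L²}² ≤ 2‖f'‖_{L²}‖xf‖_{L²}` are Gaussians. -/
theorem heisenberg_1d_extremizers (f : SchwartzMap ℝ ℂ)
    (heq : (∫ x : ℝ, ‖f x‖ ^ 2) =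
      2 * Real.sqrt (∫ x : ℝ, ‖deriv f x‖ ^ 2) * Real.sqrt (∫ x : ℝ, ‖x • f x‖ ^ 2))
    (hne : ∃ x : ℝ, f x ≠ 0) :
    ∃ (c : ℂ) (lam : ℝ), 0 < lam ∧ ∀ x : ℝ, f x = c * Complex.exp (-(lam : ℂ) * x ^ 2 / 2) := by
  obtain ⟨x₀, hx₀⟩ := hne
  set B := ∫ x : ℝ, ‖deriv f x‖ ^ 2
  set C := ∫ x : ℝ, ‖x • f x‖ ^ 2
  have hBC : 0 < 2 * √B * √C := heq ▸ f.integral_norm_sq_pos hx₀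
  have hC : 0 < √C := pos_of_mul_pos_right hBC (by positivity)
  have hB : 0 < √B := pos_of_mul_pos_right (pos_of_mul_pos_left hBC hC.le) zero_le_two
  set t := √B / √C
  have ht : t * √C = √B := div_mul_cancel₀ _ hC.ne'
  have hsquare : ∫ x, ‖deriv f x + t • x • f x‖ ^ 2 = 0 := by
    rw [SchwartzMap.integral_norm_deriv_add_smul_sq, heq]
    -- the right-hand side is `(√B - t √C)²`
    linear_combination -Real.sq_sqrt (integral_nonneg fun _ ↦ sq_nonneg _ : 0 ≤ B) -
      t ^ 2 * Real.sq_sqrt (integral_nonneg fun _ ↦ sq_nonneg _ : 0 ≤ C) + (t * √C - √B) * ht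
  have hode : ∀ x, HasDerivAt f (-(t * x) • f x) x := fun x ↦ by
    rw [neg_smul, mul_smul, ← eq_neg_of_add_eq_zero_left
      (f.deriv_add_smul_eq_zero_of_integral_norm_sq_eq_zero hsquare x)]
    exact f.differentiableAt.hasDerivAt
  refine ⟨f 0, t, div_pos hB hC, fun x ↦ ?_⟩
  rw [eq_exp_smul_of_hasDerivAt hode x, Complex.real_smul, Complex.ofReal_exp]
  push_cast
  exact mul_comm _ _
end

section
/- If f : R → C satisfies |f(x)| ≤ C e^{-x^2/2}, |f̂(ξ)| ≤ C e^{-ξ^2/2}, and additionally f(x) e^{x^2/2} → 0 as |x| → ∞ (i.e. f is o(e^{-x^2/2})), then f = 0. -/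
/-!
The Fourier–Laplace transform `F z = ∫ f t e^{-itz} dt` of `f` is entire with
`‖F z‖ ≤ C √(2π) e^{(Im z)²/2}`, so `G z = F z e^{z²/2}` is bounded on both axes and
`‖G z‖ ≤ C √(2π) e^{(Re z)²/2}`. This growth is of critical order 2 for a quadrant, so
Phragmén–Lindelöf is applied to `G z e^{iεz²}`, which is bounded on the axes and on the ray
where `e^{iεz²}` cancels `e^{(Re z)²/2}`; this ray cuts the quadrant into two sectors of opening
`< π/2`. Letting `ε → 0` bounds `G` on every quadrant, so `G` is constant by Liouville. Hence
`f̂` is a multiple of `e^{-ξ²/2}`, so is `f` by Fourier uniqueness, and the little-o hypothesis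
forces the multiple to vanish.
-/

open MeasureTheory Filter

noncomputable def ft (f : ℝ → ℂ) (ξ : ℝ) : ℂ :=
  ((Real.sqrt (2 * Real.pi))⁻¹ : ℝ) * ∫ x : ℝ, f x * Complex.exp (-Complex.I * x * ξ)

open Complex Set
open scoped Real Topology ComplexConjugate FourierTransform SchwartzMap ENNReal

lemma exp_eq_ofReal_exp_re_mul (w : ℂ) : cexp w = (rexp w.re : ℂ) * cexp (w.im * I) := by
  rw [ofReal_exp, ← Complex.exp_add, re_add_im]

/-- This is `PhragmenLindelof.horizontal_strip` for `g ∘ exp`, which tolerates growth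
`exp (B * exp (c * |Re w|))` for `c < π / (b - a)`: the opening `b - a < π / 2` makes room for
`c = 2`, i.e. for order-2 growth of `g`. -/
theorem PhragmenLindelof.sector {E : Type*} [NormedAddCommGroup E] [NormedSpace ℂ E]
    {g : ℂ → E} {K B a b : ℝ} (hab : a < b) (hba : b - a < π / 2) (hd : Differentiable ℂ g)
    (hgrow : ∀ z, ‖g z‖ ≤ K * rexp (B * ‖z‖ ^ 2))
    (ha : ∀ r : ℝ, 0 ≤ r → ‖g (r * cexp (a * I))‖ ≤ K)
    (hb : ∀ r : ℝ, 0 ≤ r → ‖g (r * cexp (b * I))‖ ≤ K)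
    {z : ℂ} (hza : a ≤ z.arg) (hzb : z.arg ≤ b) : ‖g z‖ ≤ K := by
  rcases eq_or_ne z 0 with rfl | hz
  · simpa using ha 0 le_rfl
  rw [← exp_log hz]
  change ‖(g ∘ cexp) (log z)‖ ≤ K
  refine PhragmenLindelof.horizontal_strip (a := a) (b := b)
    (hd.comp differentiable_exp).diffContOnCl
    ⟨2, by rw [lt_div_iff₀ (by linarith)]; linarith, |B|, ?_⟩ ?_ ?_
    (by rwa [log_im]) (by rwa [log_im])
  · refine Asymptotics.IsBigO.of_bound K (Eventually.of_forall fun w => ?_)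
    rw [Function.comp_apply, Real.norm_of_nonneg (Real.exp_pos _).le]
    refine (hgrow _).trans ?_
    rw [norm_exp, ← Real.exp_nat_mul]
    have hK : 0 ≤ K := (norm_nonneg _).trans (ha 0 le_rfl)
    gcongr K * rexp ?_
    refine mul_le_mul (le_abs_self B) ?_ (Real.exp_pos _).le (abs_nonneg B)
    exact Real.exp_le_exp.2 (by push_cast; linarith [le_abs_self w.re])
  · intro w hw
    rw [Function.comp_apply, exp_eq_ofReal_exp_re_mul, hw]
    exact ha _ (Real.exp_pos _).le
  · intro w hw
    rw [Function.comp_apply, exp_eq_ofReal_exp_re_mul, hw]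
    exact hb _ (Real.exp_pos _).le

lemma exists_mem_Ioo_mul_cos_eq_mul_sin {B c : ℝ} (hB : 0 < B) (hc : 0 < c) :
    ∃ θ ∈ Ioo 0 (π / 2), B * Real.cos θ = c * Real.sin θ := by
  refine ⟨Real.arctan (B / c), ⟨Real.arctan_pos.2 (by positivity),
    Real.arctan_lt_pi_div_two _⟩, ?_⟩
  have htan := Real.tan_arctan (B / c)
  rw [Real.tan_eq_sin_div_cos, div_eq_div_iff (Real.cos_arctan_pos _).ne' hc.ne'] at htan
  linarith

lemma norm_cexp_mul_I_mul_sq (ε : ℝ) (w : ℂ) :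
    ‖cexp (ε * I * w ^ 2)‖ = rexp (-(2 * ε * (w.re * w.im))) := by
  rw [norm_exp]
  congr 1
  simp [sq]
  ring

structure IsAxisBoundedOfGaussianType (G : ℂ → ℂ) (K B : ℝ) : Prop where
  differentiable : Differentiable ℂ G
  norm_le_ofReal : ∀ x : ℝ, ‖G x‖ ≤ K
  norm_le_mul_I : ∀ y : ℝ, ‖G (y * I)‖ ≤ K
  norm_le_exp : ∀ z, ‖G z‖ ≤ K * rexp (B * z.re ^ 2)

namespace IsAxisBoundedOfGaussianType

variable {G : ℂ → ℂ} {K B : ℝ}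

lemma nonneg (hG : IsAxisBoundedOfGaussianType G K B) : 0 ≤ K :=
  (norm_nonneg _).trans (hG.norm_le_ofReal 0)

lemma norm_le_mul_exp_of_quadrant (hG : IsAxisBoundedOfGaussianType G K B) (hB : 0 < B)
    {ε : ℝ} (hε : 0 < ε) {z : ℂ} (hre : 0 ≤ z.re) (him : 0 ≤ z.im) :
    ‖G z‖ ≤ K * rexp (2 * ε * (z.re * z.im)) := by
  obtain ⟨θ, ⟨hθ₀, hθ⟩, hθB⟩ := exists_mem_Ioo_mul_cos_eq_mul_sin hB (by positivity : 0 < 2 * ε)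
  set g : ℂ → ℂ := fun w => cexp (ε * I * w ^ 2) * G w
  have hd : Differentiable ℂ g := (by fun_prop : Differentiable ℂ fun w => cexp (ε * I * w ^ 2)).mul
    hG.differentiable
  have hg_le (w : ℂ) : ‖g w‖ ≤ K * rexp (B * w.re ^ 2 - 2 * ε * (w.re * w.im)) := by
    rw [norm_mul, norm_cexp_mul_I_mul_sq, sub_eq_add_neg, Real.exp_add, mul_comm (rexp _),
      ← mul_assoc K]
    exact mul_le_mul_of_nonneg_right (hG.norm_le_exp w) (Real.exp_pos _).le
  have hgrow (w : ℂ) : ‖g w‖ ≤ K * rexp ((B + ε) * ‖w‖ ^ 2) := by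
    refine (hg_le w).trans ?_
    have := hG.nonneg
    gcongr
    rw [Complex.sq_norm, normSq_apply]
    nlinarith [sq_nonneg (w.re + w.im), sq_nonneg w.im]
  have hray (r : ℝ) (_ : 0 ≤ r) : ‖g (r * cexp (θ * I))‖ ≤ K := by
    refine (hg_le _).trans (le_of_eq ?_)
    simp only [re_ofReal_mul, im_ofReal_mul, exp_ofReal_mul_I_re, exp_ofReal_mul_I_im]
    rw [show B * (r * Real.cos θ) ^ 2 - 2 * ε * (r * Real.cos θ * (r * Real.sin θ))
      = r ^ 2 * Real.cos θ * (B * Real.cos θ - 2 * ε * Real.sin θ) by ring, hθB]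
    simp
  have hgz : ‖g z‖ ≤ K := by
    rcases le_total z.arg θ with hzθ | hθz
    · refine PhragmenLindelof.sector hθ₀ (by linarith) hd hgrow (fun r _ => ?_) hray
        (arg_nonneg_iff.2 him) hzθ
      simpa [g, norm_cexp_mul_I_mul_sq] using hG.norm_le_ofReal r
    · refine PhragmenLindelof.sector hθ (by linarith) hd hgrow hray (fun r _ => ?_) hθz
        (arg_le_pi_div_two_iff.2 (Or.inl hre))
      rw [ofReal_div, ofReal_ofNat, exp_pi_div_two_mul_I]
      simpa [g, norm_cexp_mul_I_mul_sq] using hG.norm_le_mul_I r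
  rwa [norm_mul, norm_cexp_mul_I_mul_sq, Real.exp_neg, mul_comm, ← div_eq_mul_inv,
    div_le_iff₀ (Real.exp_pos _)] at hgz

lemma norm_le_of_quadrant (hG : IsAxisBoundedOfGaussianType G K B) (hB : 0 < B) {z : ℂ}
    (hre : 0 ≤ z.re) (him : 0 ≤ z.im) : ‖G z‖ ≤ K := by
  have hlim : Tendsto (fun ε : ℝ => K * rexp (2 * ε * (z.re * z.im))) (𝓝[>] 0) (𝓝 K) := by
    simpa using ((by fun_prop : Continuous fun ε : ℝ => K * rexp (2 * ε * (z.re * z.im))).tendsto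
      0).mono_left nhdsWithin_le_nhds
  exact ge_of_tendsto hlim (eventually_nhdsWithin_of_forall fun ε hε =>
    hG.norm_le_mul_exp_of_quadrant hB hε hre him)

lemma comp_neg (hG : IsAxisBoundedOfGaussianType G K B) :
    IsAxisBoundedOfGaussianType (fun z => G (-z)) K B where
  differentiable := hG.differentiable.comp differentiable_neg
  norm_le_ofReal x := by simpa using hG.norm_le_ofReal (-x)
  norm_le_mul_I y := by simpa [neg_mul] using hG.norm_le_mul_I (-y)
  norm_le_exp z := by simpa using hG.norm_le_exp (-z)

lemma conj_conj (hG : IsAxisBoundedOfGaussianType G K B) :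
    IsAxisBoundedOfGaussianType (conj ∘ G ∘ conj) K B where
  differentiable _ := differentiableAt_conj_conj_iff.2 (hG.differentiable _)
  norm_le_ofReal x := by simpa [norm_conj] using hG.norm_le_ofReal x
  norm_le_mul_I y := by simpa [norm_conj, neg_mul] using hG.norm_le_mul_I (-y)
  norm_le_exp z := by simpa [norm_conj] using hG.norm_le_exp (conj z)

lemma norm_le (hG : IsAxisBoundedOfGaussianType G K B) (hB : 0 < B) (z : ℂ) : ‖G z‖ ≤ K := by
  rcases le_total 0 z.re with hre | hre <;> rcases le_total 0 z.im with him | him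
  · exact hG.norm_le_of_quadrant hB hre him
  · simpa using hG.conj_conj.norm_le_of_quadrant hB (z := conj z) (by simpa) (by simpa)
  · simpa using hG.conj_conj.comp_neg.norm_le_of_quadrant hB (z := -conj z) (by simpa)
      (by simpa)
  · simpa using hG.comp_neg.norm_le_of_quadrant hB (z := -z) (by simpa) (by simpa)

lemma eq_apply_zero (hG : IsAxisBoundedOfGaussianType G K B) (hB : 0 < B) (z : ℂ) :
    G z = G 0 :=
  hG.differentiable.apply_eq_apply_of_bounded
    (isBounded_iff_forall_norm_le.2 ⟨K, by rintro _ ⟨w, rfl⟩; exact hG.norm_le hB w⟩) z 0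

end IsAxisBoundedOfGaussianType

lemma exp_neg_sq_div_two_add_mul (a t : ℝ) :
    rexp (-t ^ 2 / 2 + a * t) = rexp (a ^ 2 / 2) * rexp (-(1 / 2) * (t - a) ^ 2) := by
  rw [← Real.exp_add]; ring_nf

lemma integrable_exp_neg_sq_div_two_add_mul (a : ℝ) :
    Integrable fun t : ℝ => rexp (-t ^ 2 / 2 + a * t) := by
  simpa only [exp_neg_sq_div_two_add_mul a] using
    ((integrable_exp_neg_mul_sq (by norm_num : (0 : ℝ) < 1 / 2)).comp_sub_right a).const_mul _

lemma integral_exp_neg_sq_div_two_add_mul (a : ℝ) :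
    ∫ t : ℝ, rexp (-t ^ 2 / 2 + a * t) = √(2 * π) * rexp (a ^ 2 / 2) := by
  simp only [exp_neg_sq_div_two_add_mul a, integral_const_mul,
    integral_sub_right_eq_self (fun t => rexp (-(1 / 2) * t ^ 2)), integral_gaussian]
  rw [mul_comm]; norm_num [div_div_eq_mul_div, mul_comm]

lemma integrable_exp_neg_sq_div_two_add_mul_abs (a : ℝ) :
    Integrable fun t : ℝ => rexp (-t ^ 2 / 2 + a * |t|) := by
  refine ((integrable_exp_neg_sq_div_two_add_mul a).add
    (integrable_exp_neg_sq_div_two_add_mul (-a))).mono' (by fun_prop)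
    (Eventually.of_forall fun t => ?_)
  rw [Real.norm_of_nonneg (Real.exp_pos _).le]
  rcases abs_cases t with ⟨ht, -⟩ | ⟨ht, -⟩ <;> rw [ht]
  · exact le_add_of_nonneg_right (Real.exp_pos _).le
  · rw [mul_neg, ← neg_mul]; exact le_add_of_nonneg_left (Real.exp_pos _).le

lemma integrable_cexp_neg_sq_div_two : Integrable fun x : ℝ => cexp (-x ^ 2 / 2) := by
  convert integrable_cexp_neg_mul_sq (b := 1 / 2) (by norm_num) using 3
  ring

theorem Integrable.ae_eq_of_fourier_eq {V F : Type*} [NormedAddCommGroup V]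
    [InnerProductSpace ℝ V] [MeasurableSpace V] [BorelSpace V] [FiniteDimensional ℝ V]
    [NormedAddCommGroup F] [NormedSpace ℂ F] [CompleteSpace F] {f₁ f₂ : V → F}
    (h₁ : Integrable f₁) (h₂ : Integrable f₂) (h : 𝓕 f₁ = 𝓕 f₂) : f₁ =ᵐ[volume] f₂ := by
  refine ae_eq_of_integral_contDiff_smul_eq h₁.locallyIntegrable h₂.locallyIntegrable
    fun g g_diff g_supp => ?_
  let φ : 𝓢(V, ℂ) := (g_supp.comp_left (g := ofRealCLM) (map_zero _)).toSchwartzMap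
    (ofRealCLM.contDiff.comp g_diff)
  let ψ : 𝓢(V, ℂ) := 𝓕⁻ φ
  have hψ : 𝓕 ⇑ψ = ⇑φ := by
    rw [← SchwartzMap.fourier_coe, FourierTransform.fourier_fourierInv_eq]
  have hpairing (f : V → F) (hf : Integrable f) : ∫ x, g x • f x = ∫ x, ψ x • 𝓕 f x :=
    calc ∫ x, g x • f x = ∫ ξ, 𝓕 ⇑ψ ξ • f ξ := by simp [hψ, φ]
      _ = ∫ x, ψ x • 𝓕 f x := by
          simpa using! VectorFourier.integral_fourierIntegral_smul_eq_flip (L := innerₗ V)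
            Real.continuous_fourierChar continuous_inner ψ.integrable hf
  rw [hpairing f₁ h₁, hpairing f₂ h₂, h]

theorem neBot_cocompact_inf_ae {X : Type*} [TopologicalSpace X] [MeasurableSpace X]
    {μ : Measure X} [IsFiniteMeasureOnCompacts μ] (hμ : μ univ = ∞) :
    (cocompact X ⊓ ae μ).NeBot := by
  refine inf_neBot_iff.2 fun s hs t ht => ?_
  obtain ⟨K, hK, hKs⟩ := mem_cocompact.1 hs
  have hlt : μ (K ∪ tᶜ) < μ univ := by
    rw [hμ]
    exact (measure_union_le K tᶜ).trans_lt
      (by rw [mem_ae_iff.1 ht, add_zero]; exact hK.measure_lt_top)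
  obtain ⟨x, hx⟩ := ne_univ_iff_exists_notMem _ |>.1 (ne_of_apply_ne μ hlt.ne)
  simp only [mem_union, mem_compl_iff, not_or, not_not] at hx
  exact ⟨x, hKs hx.1, hx.2⟩

lemma eq_of_tendsto_cocompact_of_ae_eq {X Y : Type*} [TopologicalSpace X] [MeasurableSpace X]
    [TopologicalSpace Y] [T2Space Y] {μ : Measure X} [IsFiniteMeasureOnCompacts μ]
    (hμ : μ univ = ∞) {g : X → Y} {a b : Y} (hg : Tendsto g (cocompact X) (𝓝 a))
    (hb : ∀ᵐ x ∂μ, g x = b) : a = b :=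
  haveI := neBot_cocompact_inf_ae hμ
  tendsto_nhds_unique (hg.mono_left inf_le_left)
    ((tendsto_const_nhds.congr' (EventuallyEq.symm hb)).mono_left inf_le_right)

lemma norm_cexp_sq_div_two (z : ℂ) : ‖cexp (z ^ 2 / 2)‖ = rexp ((z.re ^ 2 - z.im ^ 2) / 2) := by
  rw [norm_exp]
  congr 1
  simp [sq]

noncomputable def fourierLaplace (f : ℝ → ℂ) (z : ℂ) : ℂ :=
  ∫ t : ℝ, f t * cexp (-I * t * z)

lemma norm_cexp_neg_I_mul (t : ℝ) (z : ℂ) : ‖cexp (-I * t * z)‖ = rexp (z.im * t) := by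
  rw [norm_exp]
  simp [mul_comm]

lemma fourierLaplace_ofReal (f : ℝ → ℂ) (ξ : ℝ) : fourierLaplace f ξ = √(2 * π) * ft f ξ := by
  rw [ft, ofReal_inv, ← mul_assoc, mul_inv_cancel₀ (ofReal_ne_zero.2 (by positivity)), one_mul]
  rfl

lemma fourier_eq_fourierLaplace (f : ℝ → ℂ) (w : ℝ) :
    𝓕 f w = fourierLaplace f (2 * π * w) := by
  rw [Real.fourier_real_eq_integral_exp_smul, fourierLaplace]
  congr with v
  rw [smul_eq_mul, mul_comm]
  congr 2
  push_cast
  ring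

lemma fourierLaplace_const_mul (a : ℂ) (f : ℝ → ℂ) (z : ℂ) :
    fourierLaplace (fun x => a * f x) z = a * fourierLaplace f z := by
  simp only [fourierLaplace, mul_assoc, integral_const_mul]

lemma fourierLaplace_gaussian (z : ℂ) :
    fourierLaplace (fun x => cexp (-x ^ 2 / 2)) z = √(2 * π) * cexp (-z ^ 2 / 2) := by
  have := integral_cexp_quadratic (b := -1 / 2) (by norm_num) (-I * z) 0
  simp only [fourierLaplace, ← Complex.exp_add]
  convert this using 3 with t
  · ring_nf
  · rw [Real.sqrt_eq_rpow, ofReal_cpow (by positivity)]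
    congr 1 <;> push_cast <;> ring
  · linear_combination (-z ^ 2 / 2) * I_sq

section GaussianDecay

variable {f : ℝ → ℂ} {C : ℝ}

lemma norm_mul_cexp_neg_I_mul_le (hf : ∀ x : ℝ, ‖f x‖ ≤ C * rexp (-x ^ 2 / 2)) (t : ℝ)
    (z : ℂ) : ‖f t * cexp (-I * t * z)‖ ≤ C * rexp (-t ^ 2 / 2 + z.im * t) := by
  rw [norm_mul, norm_cexp_neg_I_mul, Real.exp_add, ← mul_assoc]
  exact mul_le_mul_of_nonneg_right (hf t) (Real.exp_pos _).le

lemma integrable_mul_cexp_neg_I_mul (hmeas : AEStronglyMeasurable f)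
    (hf : ∀ x : ℝ, ‖f x‖ ≤ C * rexp (-x ^ 2 / 2)) (z : ℂ) :
    Integrable fun t : ℝ => f t * cexp (-I * t * z) :=
  ((integrable_exp_neg_sq_div_two_add_mul z.im).const_mul C).mono'
    (hmeas.mul (by fun_prop)) (Eventually.of_forall (norm_mul_cexp_neg_I_mul_le hf · z))

lemma norm_fourierLaplace_le (hf : ∀ x : ℝ, ‖f x‖ ≤ C * rexp (-x ^ 2 / 2)) (z : ℂ) :
    ‖fourierLaplace f z‖ ≤ C * √(2 * π) * rexp (z.im ^ 2 / 2) := by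
  calc ‖fourierLaplace f z‖ ≤ ∫ t : ℝ, C * rexp (-t ^ 2 / 2 + z.im * t) :=
        norm_integral_le_of_norm_le ((integrable_exp_neg_sq_div_two_add_mul z.im).const_mul C)
          (Eventually.of_forall (norm_mul_cexp_neg_I_mul_le hf · z))
    _ = C * √(2 * π) * rexp (z.im ^ 2 / 2) := by
        rw [integral_const_mul, integral_exp_neg_sq_div_two_add_mul, mul_assoc]

lemma norm_mul_deriv_cexp_neg_I_mul_le (hf : ∀ x : ℝ, ‖f x‖ ≤ C * rexp (-x ^ 2 / 2))
    {z₀ z : ℂ} (hz : z ∈ Metric.ball z₀ 1) (t : ℝ) :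
    ‖f t * (cexp (-I * t * z) * (-I * t))‖ ≤ C * rexp (-t ^ 2 / 2 + (|z₀.im| + 2) * |t|) := by
  have him : |z.im| ≤ |z₀.im| + 1 := by
    have h1 := abs_im_le_norm (z - z₀)
    have h2 : ‖z - z₀‖ < 1 := by rwa [← dist_eq]
    rw [sub_im] at h1
    linarith [abs_sub_abs_le_abs_sub z.im z₀.im]
  have hexp : z.im * t ≤ (|z₀.im| + 1) * |t| :=
    (le_abs_self _).trans (by rw [abs_mul]; gcongr)
  have habs : |t| ≤ rexp |t| := (le_add_of_nonneg_right zero_le_one).trans (Real.add_one_le_exp _)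
  have hC : 0 ≤ C * rexp (-t ^ 2 / 2) := (norm_nonneg _).trans (hf t)
  rw [norm_mul, norm_mul, norm_cexp_neg_I_mul]
  calc ‖f t‖ * (rexp (z.im * t) * ‖-I * t‖)
      ≤ C * rexp (-t ^ 2 / 2) * (rexp ((|z₀.im| + 1) * |t|) * rexp |t|) := by
        gcongr
        · exact hf t
        · simpa using habs
    _ = C * rexp (-t ^ 2 / 2 + (|z₀.im| + 2) * |t|) := by
        rw [mul_assoc, ← Real.exp_add, ← Real.exp_add]
        ring_nf

lemma differentiable_fourierLaplace (hmeas : AEStronglyMeasurable f)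
    (hf : ∀ x : ℝ, ‖f x‖ ≤ C * rexp (-x ^ 2 / 2)) : Differentiable ℂ (fourierLaplace f) :=
  fun z₀ => (hasDerivAt_integral_of_dominated_loc_of_deriv_le
    (F' := fun z t => f t * (cexp (-I * t * z) * (-I * t)))
    (Metric.ball_mem_nhds z₀ one_pos)
    (Eventually.of_forall fun z => (integrable_mul_cexp_neg_I_mul hmeas hf z).1)
    (integrable_mul_cexp_neg_I_mul hmeas hf z₀) (hmeas.mul (by fun_prop))
    (Eventually.of_forall fun t z hz => norm_mul_deriv_cexp_neg_I_mul_le hf hz t)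
    ((integrable_exp_neg_sq_div_two_add_mul_abs _).const_mul C)
    (Eventually.of_forall fun t z _ =>
      ((hasDerivAt_id' z).const_mul (-I * t)).cexp.const_mul (f t) |>.congr_deriv (by ring))).2
    |>.differentiableAt

lemma isAxisBoundedOfGaussianType_fourierLaplace_mul_cexp (hmeas : AEStronglyMeasurable f)
    (hf : ∀ x : ℝ, ‖f x‖ ≤ C * rexp (-x ^ 2 / 2))
    (hreal : ∀ ξ : ℝ, ‖fourierLaplace f ξ‖ ≤ C * √(2 * π) * rexp (-ξ ^ 2 / 2)) :
    IsAxisBoundedOfGaussianType (fun z => fourierLaplace f z * cexp (z ^ 2 / 2))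
      (C * √(2 * π)) (1 / 2) := by
  have hexp (z : ℂ) : ‖fourierLaplace f z * cexp (z ^ 2 / 2)‖
      ≤ C * √(2 * π) * rexp (1 / 2 * z.re ^ 2) := by
    rw [norm_mul, norm_cexp_sq_div_two]
    calc ‖fourierLaplace f z‖ * rexp ((z.re ^ 2 - z.im ^ 2) / 2)
        ≤ C * √(2 * π) * rexp (z.im ^ 2 / 2) * rexp ((z.re ^ 2 - z.im ^ 2) / 2) := by
          gcongr; exact norm_fourierLaplace_le hf z
      _ = C * √(2 * π) * rexp (1 / 2 * z.re ^ 2) := by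
          rw [mul_assoc, ← Real.exp_add]; ring_nf
  refine ⟨(differentiable_fourierLaplace hmeas hf).mul (by fun_prop), fun x => ?_,
    fun y => by simpa using hexp (y * I), hexp⟩
  rw [norm_mul, norm_cexp_sq_div_two, ofReal_re, ofReal_im]
  calc ‖fourierLaplace f x‖ * rexp ((x ^ 2 - 0 ^ 2) / 2)
      ≤ C * √(2 * π) * rexp (-x ^ 2 / 2) * rexp ((x ^ 2 - 0 ^ 2) / 2) :=
        mul_le_mul_of_nonneg_right (hreal x) (Real.exp_pos _).le
    _ = C * √(2 * π) := by
        rw [mul_assoc, ← Real.exp_add, show -x ^ 2 / 2 + (x ^ 2 - 0 ^ 2) / 2 = 0 by ring,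
          Real.exp_zero, mul_one]

theorem hardy_uncertainty (hmeas : AEStronglyMeasurable f)
    (hf : ∀ x : ℝ, ‖f x‖ ≤ C * rexp (-x ^ 2 / 2))
    (hft : ∀ ξ : ℝ, ‖ft f ξ‖ ≤ C * rexp (-ξ ^ 2 / 2)) :
    ∃ a : ℂ, f =ᵐ[volume] fun x => a * cexp (-x ^ 2 / 2) := by
  have hreal (ξ : ℝ) : ‖fourierLaplace f ξ‖ ≤ C * √(2 * π) * rexp (-ξ ^ 2 / 2) := by
    rw [fourierLaplace_ofReal, norm_mul, norm_real, Real.norm_of_nonneg (by positivity),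
      mul_comm C, mul_assoc]
    gcongr
    exact hft ξ
  have hG := isAxisBoundedOfGaussianType_fourierLaplace_mul_cexp hmeas hf hreal
  have hFL (z : ℂ) : fourierLaplace f z = fourierLaplace f 0 * cexp (-z ^ 2 / 2) := by
    have h := hG.eq_apply_zero (by norm_num) z
    rw [zero_pow two_ne_zero, zero_div, exp_zero, mul_one] at h
    rw [← h, mul_assoc, ← Complex.exp_add, neg_div, add_neg_cancel, exp_zero, mul_one]
  refine ⟨fourierLaplace f 0 / √(2 * π), Integrable.ae_eq_of_fourier_eq ?_
    (integrable_cexp_neg_sq_div_two.const_mul _) (funext fun w => ?_)⟩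
  · simpa using integrable_mul_cexp_neg_I_mul hmeas hf 0
  · rw [fourier_eq_fourierLaplace, fourier_eq_fourierLaplace, fourierLaplace_const_mul,
      fourierLaplace_gaussian, hFL]
    field_simp

end GaussianDecay

theorem hardy_uncertainty_little_o_general (f : ℝ → ℂ) (C : ℝ)
    (hmeas : Measurable f)
    (hf : ∀ x : ℝ, ‖f x‖ ≤ C * Real.exp (-x ^ 2 / 2))
    (hft : ∀ ξ : ℝ, ‖ft f ξ‖ ≤ C * Real.exp (-ξ ^ 2 / 2))
    (hlittle : Tendsto (fun x : ℝ => ‖f x‖ * Real.exp (x ^ 2 / 2)) (cocompact ℝ) (nhds 0)) :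
    ∀ᵐ x : ℝ, f x = 0 := by
  obtain ⟨a, ha⟩ := hardy_uncertainty hmeas.aestronglyMeasurable hf hft
  have ha0 : ‖a‖ = 0 := by
    refine (eq_of_tendsto_cocompact_of_ae_eq Real.volume_univ hlittle ?_).symm
    filter_upwards [ha] with x hx
    rw [hx, norm_mul, norm_exp, mul_assoc, ← Real.exp_add, ← ofReal_pow, neg_div, neg_re,
      div_ofNat_re, ofReal_re, neg_add_cancel, Real.exp_zero, mul_one]
  filter_upwards [ha] with x hx
  simpa [norm_eq_zero.1 ha0] using hx

/-- Hardy's theorem, little-o version: if `f` and `f̂` are `O(e^{-x²/2})` and moreover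
`f` is `o(e^{-x²/2})` as `|x| → ∞`, then `f = 0`. -/
theorem hardy_uncertainty_little_o (f : ℝ → ℂ) (C : ℝ) (hC : 0 < C)
    (hmeas : Measurable f)
    (hf : ∀ x : ℝ, ‖f x‖ ≤ C * Real.exp (-x ^ 2 / 2))
    (hft : ∀ ξ : ℝ, ‖ft f ξ‖ ≤ C * Real.exp (-ξ ^ 2 / 2))
    (hlittle : Tendsto (fun x : ℝ => ‖f x‖ * Real.exp (x ^ 2 / 2)) (cocompact ℝ) (nhds 0)) :
    ∀ᵐ x : ℝ, f x = 0 :=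
  hardy_uncertainty_little_o_general f C hmeas hf hft hlittle
end

section
/- Let H be a Hilbert space, S symmetric, A skew-symmetric (both time-independent), and v : [0,1] → H a smooth solution of ∂_t v = (S + A)v with v(t) ≠ 0. Set H(t) = ⟨v(t), v(t)⟩. If ⟨(SA − AS)w, w⟩ ≥ 0 for all w in the relevant domain, then log H(t) is convex on [0,1]; in particular H(t) ≤ H(0)^{1−t} H(1)^t for all t ∈ [0,1]. -/
/-!
Along the flow `v' = (S + A) v` the skew part drops out of the derivative of `g = ‖v‖²`:
`g' = 2 re ⟪v, S v⟫`, and then `g'' = 4 ‖S v‖² + 4 re ⟪S v, A v⟫` with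
`2 re ⟪S v, A v⟫ = re ⟪(SA - AS) v, v⟫ ≥ 0`. By Cauchy–Schwarz `g'² ≤ 4 ‖v‖² ‖S v‖² ≤ g'' g`,
which is `(log g)'' ≥ 0`. Differentiating `S v` needs `S` bounded, which is Hellinger–Toeplitz.
-/

open RCLike Set
open scoped InnerProductSpace

theorem convexOn_log_of_sq_deriv_le {g g' g'' : ℝ → ℝ} (hpos : ∀ t, 0 < g t)
    (hg : ∀ t, HasDerivAt g (g' t) t) (hg' : ∀ t, HasDerivAt g' (g'' t) t)
    (hle : ∀ t, g' t ^ 2 ≤ g'' t * g t) :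
    ConvexOn ℝ univ fun t => Real.log (g t) := by
  have hlog (t : ℝ) : HasDerivAt (fun t => Real.log (g t)) (g' t / g t) t :=
    (hg t).log (hpos t).ne'
  have hlog' (t : ℝ) :
      HasDerivAt (fun t => g' t / g t) ((g'' t * g t - g' t * g' t) / g t ^ 2) t :=
    (hg' t).div (hg t) (hpos t).ne'
  refine convexOn_of_hasDerivWithinAt2_nonneg convex_univ
    (fun t _ => (hlog t).continuousAt.continuousWithinAt)
    (fun t _ => (hlog t).hasDerivWithinAt) (fun t _ => (hlog' t).hasDerivWithinAt)
    fun t _ => div_nonneg ?_ (sq_nonneg _)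
  nlinarith [hle t]

theorem le_rpow_mul_rpow_of_convexOn_log {g : ℝ → ℝ} (hpos : ∀ t ∈ Icc (0 : ℝ) 1, 0 < g t)
    (hconv : ConvexOn ℝ (Icc 0 1) fun t => Real.log (g t)) {t : ℝ} (ht : t ∈ Icc (0 : ℝ) 1) :
    g t ≤ g 0 ^ (1 - t) * g 1 ^ t := by
  have h0 := hpos 0 (left_mem_Icc.2 zero_le_one)
  have h1 := hpos 1 (right_mem_Icc.2 zero_le_one)
  have hlog := hconv.2 (left_mem_Icc.2 zero_le_one) (right_mem_Icc.2 zero_le_one)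
    (sub_nonneg.2 ht.2) ht.1 (sub_add_cancel 1 t)
  simp only [smul_eq_mul, mul_zero, mul_one, zero_add] at hlog
  rw [← Real.log_le_log_iff (hpos t ht) (by positivity), Real.log_mul (by positivity)
    (by positivity), Real.log_rpow h0, Real.log_rpow h1]
  exact hlog

section

variable {𝕜 E : Type*} [RCLike 𝕜] [NormedAddCommGroup E] [InnerProductSpace 𝕜 E]

theorem HasDerivAt.re_inner [NormedSpace ℝ E] {f g : ℝ → E} {f' g' : E} {x : ℝ}
    (hf : HasDerivAt f f' x) (hg : HasDerivAt g g' x) :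
    HasDerivAt (fun t => re ⟪f t, g t⟫_𝕜) (re ⟪f x, g'⟫_𝕜 + re ⟪f', g x⟫_𝕜) x := by
  have h := reCLM.hasFDerivAt.comp_hasDerivAt x (hf.inner 𝕜 hg)
  simp only [Function.comp_def, reCLM_apply, map_add] at h
  exact h

namespace LinearMap

def IsSkewSymmetric (A : E →ₗ[𝕜] E) : Prop :=
  ∀ x y, ⟪A x, y⟫_𝕜 = -⟪x, A y⟫_𝕜

variable {S A : E →ₗ[𝕜] E}

theorem IsSkewSymmetric.re_inner_apply_self (hA : A.IsSkewSymmetric) (w : E) :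
    re ⟪w, A w⟫_𝕜 = 0 := by
  have h := congrArg re (hA w w)
  rw [inner_re_symm, map_neg] at h
  linarith

theorem re_inner_commutator_apply_self (hS : S.IsSymmetric) (hA : A.IsSkewSymmetric) (w : E) :
    re ⟪S (A w) - A (S w), w⟫_𝕜 = 2 * re ⟪S w, A w⟫_𝕜 := by
  rw [inner_sub_left, hS (A w), hA (S w), map_sub, map_neg, inner_re_symm (A w)]
  ring

variable [NormedSpace ℝ E] {v : ℝ → E} {t : ℝ}

theorem hasDerivAt_norm_sq_of_hasDerivAt_add (hA : A.IsSkewSymmetric)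
    (hv : HasDerivAt v (S (v t) + A (v t)) t) :
    HasDerivAt (fun t => ‖v t‖ ^ 2) (2 * re ⟪v t, S (v t)⟫_𝕜) t := by
  have h := hv.re_inner (𝕜 := 𝕜) hv
  simp only [inner_self_eq_norm_sq] at h
  convert h using 1
  rw [inner_re_symm (S (v t) + A (v t)), inner_add_right, map_add, hA.re_inner_apply_self]
  ring

theorem hasDerivAt_re_inner_apply_of_hasDerivAt_add [CompleteSpace E] [IsScalarTower ℝ 𝕜 E]
    (hS : S.IsSymmetric) (hv : HasDerivAt v (S (v t) + A (v t)) t) :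
    HasDerivAt (fun t => 2 * re ⟪v t, S (v t)⟫_𝕜)
      (4 * ‖S (v t)‖ ^ 2 + 4 * re ⟪S (v t), A (v t)⟫_𝕜) t := by
  let S' : E →L[𝕜] E := ⟨S, hS.continuous⟩
  have hSv : HasDerivAt (fun t => S (v t)) (S (S (v t) + A (v t))) t :=
    (S'.restrictScalars ℝ).hasFDerivAt.comp_hasDerivAt t hv
  refine ((hv.re_inner hSv).const_mul 2).congr_deriv ?_
  rw [← hS, inner_re_symm (S (v t) + A (v t)), inner_add_right, map_add,
    inner_self_eq_norm_sq]
  ring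

end LinearMap

theorem sq_two_mul_re_inner_le {x y z : E} (hyz : 0 ≤ re ⟪y, z⟫_𝕜) :
    (2 * re ⟪x, y⟫_𝕜) ^ 2 ≤ (4 * ‖y‖ ^ 2 + 4 * re ⟪y, z⟫_𝕜) * ‖x‖ ^ 2 := by
  have hcs : |re ⟪x, y⟫_𝕜| ≤ ‖x‖ * ‖y‖ := (abs_re_le_norm _).trans (norm_inner_le_norm x y)
  nlinarith [sq_abs (re ⟪x, y⟫_𝕜), abs_nonneg (re ⟪x, y⟫_𝕜), mul_nonneg hyz (sq_nonneg ‖x‖)]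

end

/-- Agmon–Nirenberg logarithmic convexity: if `∂_t v = (S + A)v` with `S` symmetric,
`A` skew-symmetric and nonnegative commutator `SA − AS`, then `log ‖v(t)‖²` is convex
on `[0,1]` and `H(t) ≤ H(0)^{1−t} H(1)^t` for `H(t) = ‖v(t)‖²`. -/
theorem agmon_nirenberg_log_convexity
    {H : Type*} [NormedAddCommGroup H] [InnerProductSpace ℂ H] [CompleteSpace H]
    (S A : H →ₗ[ℂ] H)
    (hS : ∀ x y : H, inner ℂ (S x) y = (inner ℂ x (S y) : ℂ))
    (hA : ∀ x y : H, inner ℂ (A x) y = -(inner ℂ x (A y) : ℂ))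
    (hcomm : ∀ w : H, 0 ≤ (inner ℂ (S (A w) - A (S w)) w : ℂ).re)
    (v : ℝ → H) (hv : ∀ t : ℝ, HasDerivAt v (S (v t) + A (v t)) t)
    (hne : ∀ t : ℝ, v t ≠ 0) :
    ConvexOn ℝ (Set.Icc (0 : ℝ) 1) (fun t => Real.log (‖v t‖ ^ 2)) ∧
      ∀ t ∈ Set.Icc (0 : ℝ) 1,
        ‖v t‖ ^ 2 ≤ Real.rpow (‖v 0‖ ^ 2) (1 - t) * Real.rpow (‖v 1‖ ^ 2) t := by
  have hSA (w : H) : 0 ≤ re ⟪S w, A w⟫_ℂ := by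
    have h := LinearMap.re_inner_commutator_apply_self (𝕜 := ℂ) hS hA w
    simp only [re_to_complex] at h ⊢
    linarith [hcomm w]
  have hpos (t : ℝ) : 0 < ‖v t‖ ^ 2 := pow_pos (norm_pos_iff.2 (hne t)) 2
  have hconv : ConvexOn ℝ (Icc 0 1) fun t => Real.log (‖v t‖ ^ 2) :=
    (convexOn_log_of_sq_deriv_le hpos
      (fun t => LinearMap.hasDerivAt_norm_sq_of_hasDerivAt_add hA (hv t))
      (fun t => LinearMap.hasDerivAt_re_inner_apply_of_hasDerivAt_add hS (hv t))
      fun t => sq_two_mul_re_inner_le (hSA (v t))).subset (subset_univ _) (convex_Icc 0 1)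
  exact ⟨hconv, fun t ht => le_rpow_mul_rpow_of_convexOn_log (fun t _ => hpos t) hconv ht⟩
end
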